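/- Let g be an invertible symmetric real 4×4 matrix and ξ ∈ ℝ⁴ a nonzero covector, and set ξ* = g⁻¹ξ. Then the linear map ι_ξ from symmetric real 4×4 matrices to ℝ⁴ defined by ι_ξ(h) = (I_g h)·ξ*, where I_g h = h − (tr(g⁻¹h)/2)·g, is surjective, and its kernel has dimension 6 (equivalently, its range has dimension 4). (This is the key claim in the proof of Proposition 3.6.) -/
import Mathlib

open Matrix

/-! Auxiliary material -/

private lemma vecMulVec_mulVec' (a b u : Fin 4 → ℝ) :
    vecMulVec a b *ᵥ u = (b ⬝ᵥ u) • a := by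
  ext i
  simp [vecMulVec_apply, mulVec, dotProduct, Finset.mul_sum, mul_assoc, mul_comm, mul_left_comm]

private lemma vecMulVec_transpose' (a b : Fin 4 → ℝ) :
    (vecMulVec a b)ᵀ = vecMulVec b a := by
  ext i j; simp [vecMulVec_apply, mul_comm]

/-- The submodule of symmetric 4×4 matrices. -/
def symSubmodule : Submodule ℝ (Matrix (Fin 4) (Fin 4) ℝ) where
  carrier := {h | h.IsSymm}
  add_mem' ha hb := ha.add hb
  zero_mem' := isSymm_zero
  smul_mem' c _ hh := hh.smul c

/-- Symmetric matrices are determined by their upper-triangular entries. -/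
noncomputable def symEquiv : symSubmodule ≃ₗ[ℝ] ({p : Fin 4 × Fin 4 // p.1 ≤ p.2} → ℝ) where
  toFun h p := h.val p.1.1 p.1.2
  map_add' _ _ := rfl
  map_smul' _ _ := rfl
  invFun f := ⟨Matrix.of fun i j =>
      if hle : i ≤ j then f ⟨(i, j), hle⟩ else f ⟨(j, i), le_of_not_ge hle⟩, by
    show Matrix.IsSymm _
    ext i j
    simp only [Matrix.transpose_apply, Matrix.of_apply]
    rcases le_total i j with hij | hji
    · rcases le_or_gt j i with hji | hlt
      · have : i = j := le_antisymm hij hji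
        subst this; simp
      · rw [dif_neg (not_le.mpr hlt), dif_pos hij]
    · rcases le_or_gt i j with hij | hlt
      · have : i = j := le_antisymm hij hji
        subst this; simp
      · rw [dif_pos hji, dif_neg (not_le.mpr hlt)]⟩
  left_inv h := by
    apply Subtype.ext
    ext i j
    simp only [Matrix.of_apply]
    split
    · rfl
    · exact h.2.apply i j
  right_inv f := by
    funext p
    simp only [Matrix.of_apply]
    rw [dif_pos p.2]

/-- The map ι_ξ as a linear map on all matrices. -/
noncomputable def Lmap (g : Matrix (Fin 4) (Fin 4) ℝ) (u : Fin 4 → ℝ) :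
    Matrix (Fin 4) (Fin 4) ℝ →ₗ[ℝ] (Fin 4 → ℝ) where
  toFun h := (h - (((g⁻¹ * h).trace) / 2) • g) *ᵥ u
  map_add' x y := by
    simp only [mul_add, trace_add, add_div, add_smul, sub_mulVec, add_mulVec,
      smul_mulVec]
    module
  map_smul' c x := by
    simp only [mul_smul_comm, trace_smul, smul_eq_mul, RingHom.id_apply, sub_mulVec,
      add_mulVec, smul_mulVec, mul_div_assoc]
    module

set_option maxHeartbeats 1000000 in
set_option synthInstance.maxHeartbeats 400000 in
/-- Key claim in the proof of Proposition 3.6: the map ι_ξ h = (I_g h)(ξ*,·) is surjective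
from symmetric 4×4 matrices onto ℝ⁴ and its kernel has dimension 6. -/
theorem stmt_5 (g : Matrix (Fin 4) (Fin 4) ℝ) (hg : IsUnit g) (hgsymm : g.IsSymm)
    (ξ : Fin 4 → ℝ) (hξ : ξ ≠ 0) :
    (∀ v : Fin 4 → ℝ, ∃ h : Matrix (Fin 4) (Fin 4) ℝ, h.IsSymm ∧
        (h - (((g⁻¹ * h).trace) / 2) • g) *ᵥ (g⁻¹ *ᵥ ξ) = v) ∧
    ∃ S : Submodule ℝ (Matrix (Fin 4) (Fin 4) ℝ),
      (S : Set (Matrix (Fin 4) (Fin 4) ℝ)) =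
        {h | h.IsSymm ∧ (h - (((g⁻¹ * h).trace) / 2) • g) *ᵥ (g⁻¹ *ᵥ ξ) = 0} ∧
      Module.finrank ℝ S = 6 := by
  have hdet : IsUnit g.det := (isUnit_iff_isUnit_det g).mp hg
  have hginv : g⁻¹ * g = 1 := nonsing_inv_mul g hdet
  have hgg : g * g⁻¹ = 1 := mul_nonsing_inv g hdet
  set u : Fin 4 → ℝ := g⁻¹ *ᵥ ξ with hu
  have hgu : g *ᵥ u = ξ := by
    rw [hu, mulVec_mulVec, hgg, one_mulVec]
  have hu0 : u ≠ 0 := by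
    intro h0
    apply hξ
    rw [← hgu, h0, mulVec_zero]
  have huu : u ⬝ᵥ u ≠ 0 := fun h => hu0 (dotProduct_self_eq_zero.mp h)
  set w : Fin 4 → ℝ := (u ⬝ᵥ u)⁻¹ • u with hw
  have hwu : w ⬝ᵥ u = 1 := by
    rw [hw, smul_dotProduct, smul_eq_mul, inv_mul_cancel₀ huu]
  -- the surjectivity construction
  have hsurj : ∀ v : Fin 4 → ℝ, ∃ h : Matrix (Fin 4) (Fin 4) ℝ, h.IsSymm ∧
      (h - (((g⁻¹ * h).trace) / 2) • g) *ᵥ u = v := by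
    intro v
    set h₀ : Matrix (Fin 4) (Fin 4) ℝ :=
      vecMulVec v w + vecMulVec w v - (v ⬝ᵥ u) • vecMulVec w w with hh₀
    set t : ℝ := ((g⁻¹ * h₀).trace) with ht
    refine ⟨h₀ + (-(t / 2)) • g, ?_, ?_⟩
    · -- symmetry
      show Matrix.IsSymm _
      rw [Matrix.IsSymm, transpose_add, transpose_sub, transpose_add, transpose_smul,
        transpose_smul, vecMulVec_transpose', vecMulVec_transpose', vecMulVec_transpose',
        hgsymm.eq]
      rw [hh₀]
      abel
    · -- the value
      have htr : (g⁻¹ * (h₀ + (-(t / 2)) • g)).trace = -t := by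
        rw [mul_add, trace_add, mul_smul_comm, trace_smul, hginv, trace_one, ← ht]
        simp only [smul_eq_mul]
        norm_num
        ring
      rw [htr]
      have : h₀ + -(t / 2) • g - (-t / 2) • g = h₀ := by
        have : (-t / 2 : ℝ) = -(t / 2) := by ring
        rw [this]
        abel
      rw [this, hh₀, sub_mulVec, add_mulVec, smul_mulVec,
        vecMulVec_mulVec', vecMulVec_mulVec', vecMulVec_mulVec', hwu]
      simp
  constructor
  · exact hsurj
  -- kernel dimension
  · set L : Matrix (Fin 4) (Fin 4) ℝ →ₗ[ℝ] (Fin 4 → ℝ) := Lmap g u with hL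
    have hLapp : ∀ h, L h = (h - (((g⁻¹ * h).trace) / 2) • g) *ᵥ u := fun _ => rfl
    set L' : symSubmodule →ₗ[ℝ] (Fin 4 → ℝ) := L ∘ₗ symSubmodule.subtype with hL'
    have hL'surj : Function.Surjective L' := by
      intro v
      obtain ⟨h, hsym, hval⟩ := hsurj v
      exact ⟨⟨h, hsym⟩, by rw [hL', LinearMap.comp_apply, Submodule.subtype_apply, hLapp]; exact hval⟩
    have hrange : LinearMap.range L' = ⊤ := LinearMap.range_eq_top.mpr hL'surj
    have hdim : Module.finrank ℝ symSubmodule = 10 := by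
      rw [symEquiv.finrank_eq, Module.finrank_fintype_fun_eq_card]
      decide
    have hrn := LinearMap.finrank_range_add_finrank_ker L'
    rw [hrange, finrank_top, Module.finrank_fintype_fun_eq_card, Fintype.card_fin, hdim] at hrn
    have hker : Module.finrank ℝ (LinearMap.ker L') = 6 := by omega
    refine ⟨symSubmodule ⊓ LinearMap.ker L, ?_, ?_⟩
    · ext h
      simp only [Submodule.mem_inf, SetLike.mem_coe, LinearMap.mem_ker, Set.mem_setOf_eq, hLapp]
      rfl
    · have hcomap : Submodule.comap symSubmodule.subtype (symSubmodule ⊓ LinearMap.ker L)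
          = LinearMap.ker L' := by
        rw [hL', LinearMap.ker_comp]
        ext x
        simp only [Submodule.mem_comap, Submodule.mem_inf]
        exact and_iff_right x.2
      have e := Submodule.comapSubtypeEquivOfLe
        (inf_le_left : symSubmodule ⊓ LinearMap.ker L ≤ symSubmodule)
      have hfe : Module.finrank ℝ
            (Submodule.comap symSubmodule.subtype (symSubmodule ⊓ LinearMap.ker L)) =
          Module.finrank ℝ (symSubmodule ⊓ LinearMap.ker L : Submodule ℝ _) := e.finrank_eq
      rw [hcomap, hker] at hfe
      exact hfe.symm
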